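/- arXiv:2006.04860 — 8 statements merged into one kernel-verified Lean document; each statement's English description precedes it below -/
import Mathlib

section
/- Let R : X → X be a linear isometry with R^m = Id (m ≥ 2), let M = Id − R, and let γ > 0. Then (Id + γM) is invertible and its inverse equals (1/((1+γ)^m − γ^m)) Σ_{k=0}^{m−1} (1+γ)^{m−1−k} γ^k R^k. -/
/-!
Write `Id + γM = (1 + γ) • Id - γ • R`. Since scalars commute with `R`, the geometric-sum
factorisation `x ^ m - y ^ m = (x - y) * ∑ x ^ (m - 1 - k) * y ^ k` applies to
`x = (1 + γ) • Id`, `y = γ • R`, on either side; as `R ^ m = Id` the product is the nonzero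
scalar `(1 + γ) ^ m - γ ^ m`.
-/

open Finset

section
variable {𝕜 A : Type*} [CommRing 𝕜] [Ring A] [Algebra 𝕜 A]

theorem smul_pow_mul_algebraMap_pow (a b : 𝕜) (T : A) (i j : ℕ) :
    (b • T) ^ j * algebraMap 𝕜 A a ^ i = (a ^ i * b ^ j) • T ^ j := by
  rw [← map_pow, ← Algebra.commutes, Algebra.algebraMap_eq_smul_one, smul_pow, smul_mul_assoc,
    one_mul, smul_smul]

theorem sum_pow_mul_smul_pow_eq_geom_sum₂ (a b : 𝕜) (T : A) (n : ℕ) :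
    ∑ k ∈ range n, (a ^ (n - 1 - k) * b ^ k) • T ^ k =
      ∑ k ∈ range n, algebraMap 𝕜 A a ^ k * (b • T) ^ (n - 1 - k) := by
  rw [(Algebra.commute_algebraMap_left a (b • T)).geom_sum₂_comm]
  simp only [smul_pow_mul_algebraMap_pow]

theorem smul_one_sub_smul_mul_sum (a b : 𝕜) (T : A) (n : ℕ) :
    (a • 1 - b • T) * ∑ k ∈ range n, (a ^ (n - 1 - k) * b ^ k) • T ^ k =
      a ^ n • 1 - (b • T) ^ n := by
  rw [sum_pow_mul_smul_pow_eq_geom_sum₂, ← Algebra.algebraMap_eq_smul_one,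
    (Algebra.commute_algebraMap_left a (b • T)).mul_geom_sum₂, ← map_pow, Algebra.algebraMap_eq_smul_one]

theorem sum_mul_smul_one_sub_smul (a b : 𝕜) (T : A) (n : ℕ) :
    (∑ k ∈ range n, (a ^ (n - 1 - k) * b ^ k) • T ^ k) * (a • 1 - b • T) =
      a ^ n • 1 - (b • T) ^ n := by
  rw [sum_pow_mul_smul_pow_eq_geom_sum₂, ← Algebra.algebraMap_eq_smul_one,
    (Algebra.commute_algebraMap_left a (b • T)).geom_sum₂_mul, ← map_pow, Algebra.algebraMap_eq_smul_one]

end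

section
variable {𝕜 A : Type*} [Field 𝕜] [Ring A] [Algebra 𝕜 A] {a b : 𝕜} {T : A} {n : ℕ}

theorem smul_one_sub_smul_mul_inv_smul_sum (hT : T ^ n = 1) (hab : a ^ n ≠ b ^ n) :
    (a • 1 - b • T) * ((a ^ n - b ^ n)⁻¹ • ∑ k ∈ range n, (a ^ (n - 1 - k) * b ^ k) • T ^ k) =
      1 := by
  rw [mul_smul_comm, smul_one_sub_smul_mul_sum, smul_pow, hT, ← sub_smul, smul_smul,
    inv_mul_cancel₀ (sub_ne_zero.mpr hab), one_smul]

theorem inv_smul_sum_mul_smul_one_sub_smul (hT : T ^ n = 1) (hab : a ^ n ≠ b ^ n) :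
    ((a ^ n - b ^ n)⁻¹ • ∑ k ∈ range n, (a ^ (n - 1 - k) * b ^ k) • T ^ k) * (a • 1 - b • T) =
      1 := by
  rw [smul_mul_assoc, sum_mul_smul_one_sub_smul, smul_pow, hT, ← sub_smul, smul_smul,
    inv_mul_cancel₀ (sub_ne_zero.mpr hab), one_smul]

end

theorem resolvent_of_gammaM_general
    {X : Type*} [NormedAddCommGroup X] [InnerProductSpace ℝ X]
    (m : ℕ) (hm : 2 ≤ m) (R : X →L[ℝ] X) (hRm : R ^ m = 1)
    (γ : ℝ) (hγ : 0 < γ) :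
    (1 + γ • (1 - R)) *
      (((1 + γ) ^ m - γ ^ m)⁻¹ •
        ∑ k ∈ Finset.range m, ((1 + γ) ^ (m - 1 - k) * γ ^ k) • R ^ k) = 1 ∧
    (((1 + γ) ^ m - γ ^ m)⁻¹ •
        ∑ k ∈ Finset.range m, ((1 + γ) ^ (m - 1 - k) * γ ^ k) • R ^ k) *
      (1 + γ • (1 - R)) = 1 := by
  have hA : 1 + γ • (1 - R) = (1 + γ) • 1 - γ • R := by
    rw [add_smul, one_smul, smul_sub]
    abel
  have hpow : (1 + γ) ^ m ≠ γ ^ m :=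
    (pow_lt_pow_left₀ (lt_one_add γ) hγ.le (by omega)).ne'
  rw [hA]
  exact ⟨smul_one_sub_smul_mul_inv_smul_sum hRm hpow,
    inv_smul_sum_mul_smul_one_sub_smul hRm hpow⟩

/-- Resolvent of `γM` where `M = Id − R` and `R` is a linear isometry of finite order `m`. -/
theorem resolvent_of_gammaM
    {X : Type*} [NormedAddCommGroup X] [InnerProductSpace ℝ X] [CompleteSpace X]
    (m : ℕ) (hm : 2 ≤ m) (R : X →L[ℝ] X) (hR : ∀ x, ‖R x‖ = ‖x‖) (hRm : R ^ m = 1)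
    (γ : ℝ) (hγ : 0 < γ) :
    (1 + γ • (1 - R)) *
      (((1 + γ) ^ m - γ ^ m)⁻¹ •
        ∑ k ∈ Finset.range m, ((1 + γ) ^ (m - 1 - k) * γ ^ k) • R ^ k) = 1 ∧
    (((1 + γ) ^ m - γ ^ m)⁻¹ •
        ∑ k ∈ Finset.range m, ((1 + γ) ^ (m - 1 - k) * γ ^ k) • R ^ k) *
      (1 + γ • (1 - R)) = 1 :=
  resolvent_of_gammaM_general m hm R hRm γ hγ
end

section
/- With R a linear isometry of order m and M = Id − R, for every x ∈ X, J_{γM} x → P_D x as γ → +∞, where P_D = (1/m) Σ_{k=0}^{m−1} R^k is the orthogonal projection onto D = Fix R. -/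
/-!
Put `q = 1 + γ⁻¹`, so that `1 + γ (1 - R) = γ (q - R)`. Since `R ^ m = 1`, the geometric sum
`∑ k < m, q ^ (m - 1 - k) R ^ k` inverts `q - R` up to the scalar `q ^ m - 1 = γ⁻¹ ∑ i < m, q ^ i`.
Hence `J γ = (∑ i < m, q ^ i)⁻¹ ∑ k < m, q ^ (m - 1 - k) R ^ k`, which depends continuously on `q`
near `q = 1`, where it equals `m⁻¹ ∑ k < m, R ^ k`; and `q → 1` as `γ → ∞`.
-/

open Filter Finset Topology

section

variable {A : Type*}

noncomputable def finiteOrderResolvent [Ring A] [Algebra ℝ A] (r : A) (m : ℕ) (q : ℝ) : A :=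
  (∑ i ∈ range m, q ^ i)⁻¹ • ∑ k ∈ range m, q ^ (m - 1 - k) • r ^ k

lemma one_add_smul_one_sub_mul_geom_sum {𝕜 : Type*} [Field 𝕜] [Ring A] [Algebra 𝕜 A]
    {r : A} {m : ℕ} (hrm : r ^ m = 1) {γ : 𝕜} (hγ : γ ≠ 0) :
    (1 + γ • (1 - r)) * ∑ k ∈ range m, (1 + γ⁻¹) ^ (m - 1 - k) • r ^ k =
      algebraMap 𝕜 A (∑ i ∈ range m, (1 + γ⁻¹) ^ i) := by
  set q := 1 + γ⁻¹
  have hγq : γ * (q - 1) = 1 := by simp [q, hγ]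
  have hT : 1 + γ • (1 - r) = γ • (algebraMap 𝕜 A q - r) := by
    have hγq' : γ * q = γ + 1 := by linear_combination hγq
    rw [Algebra.algebraMap_eq_smul_one, smul_sub γ (q • (1 : A)), smul_smul, hγq', add_smul,
      one_smul, smul_sub]
    abel
  have hc : Commute (algebraMap 𝕜 A q) r := Algebra.commute_algebraMap_left q r
  have hS : ∑ k ∈ range m, q ^ (m - 1 - k) • r ^ k =
      ∑ k ∈ range m, r ^ k * algebraMap 𝕜 A q ^ (m - 1 - k) := by
    simp only [Algebra.smul_def, map_pow, (hc.pow_pow _ _).eq]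
  rw [hT, hS, ← hc.geom_sum₂_comm, smul_mul_assoc, hc.mul_geom_sum₂, hrm, ← map_pow,
    ← map_one (algebraMap 𝕜 A), ← map_sub, Algebra.smul_def, ← map_mul, ← geom_sum_mul,
    mul_comm, mul_assoc, mul_comm _ γ, hγq, mul_one]

lemma mul_finiteOrderResolvent [Ring A] [Algebra ℝ A] {r : A} {m : ℕ} (hm : m ≠ 0)
    (hrm : r ^ m = 1) {γ : ℝ} (hγ : 0 < γ) :
    (1 + γ • (1 - r)) * finiteOrderResolvent r m (1 + γ⁻¹) = 1 := by
  have hpos : 0 < ∑ i ∈ range m, (1 + γ⁻¹) ^ i := geom_sum_pos (by positivity) hm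
  rw [finiteOrderResolvent, mul_smul_comm, one_add_smul_one_sub_mul_geom_sum hrm hγ.ne',
    Algebra.smul_def, ← map_mul, inv_mul_cancel₀ hpos.ne', map_one]

lemma tendsto_finiteOrderResolvent [Ring A] [Algebra ℝ A] [TopologicalSpace A] [ContinuousAdd A]
    [ContinuousSMul ℝ A] (r : A) {m : ℕ} (hm : m ≠ 0) :
    Tendsto (fun γ : ℝ => finiteOrderResolvent r m (1 + γ⁻¹)) atTop
      (𝓝 ((m : ℝ)⁻¹ • ∑ k ∈ range m, r ^ k)) := by
  have hq : Tendsto (fun γ : ℝ => 1 + γ⁻¹) atTop (𝓝 1) := by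
    simpa using tendsto_inv_atTop_zero.const_add (1 : ℝ)
  have hcont : ContinuousAt (finiteOrderResolvent r m) 1 := by
    unfold finiteOrderResolvent
    fun_prop (disch := simpa using hm)
  have hval : finiteOrderResolvent r m 1 = (m : ℝ)⁻¹ • ∑ k ∈ range m, r ^ k := by
    simp [finiteOrderResolvent]
  exact hval ▸ hcont.tendsto.comp hq

end

theorem resolvent_tendsto_projection_general
    {X : Type*} [NormedAddCommGroup X] [InnerProductSpace ℝ X]
    (m : ℕ) (hm : 2 ≤ m) (R : X →L[ℝ] X) (hRm : R ^ m = 1)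
    (J : ℝ → X →L[ℝ] X)
    (hJ : ∀ γ > (0 : ℝ), (1 + γ • (1 - R)) * J γ = 1 ∧ J γ * (1 + γ • (1 - R)) = 1)
    (x : X) :
    Filter.Tendsto (fun γ => J γ x) Filter.atTop
      (nhds (((m : ℝ)⁻¹ • ∑ k ∈ Finset.range m, R ^ k) x)) := by
  have hm0 : m ≠ 0 := by omega
  have hJ_eq : ∀ᶠ γ in atTop, finiteOrderResolvent R m (1 + γ⁻¹) = J γ := by
    filter_upwards [eventually_gt_atTop 0] with γ hγ
    exact (left_inv_eq_right_inv (hJ γ hγ).2 (mul_finiteOrderResolvent hm0 hRm hγ)).symm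
  exact ((ContinuousLinearMap.apply ℝ X x).continuous.tendsto _).comp
    ((tendsto_finiteOrderResolvent R hm0).congr' hJ_eq)

/-- For `M = Id − R` with `R` a linear isometry of order `m`, the resolvent
`J_{γM}` converges pointwise, as `γ → +∞`, to `P_D = (1/m) Σ_{k=0}^{m−1} R^k`,
the orthogonal projection onto `D = Fix R`. -/
theorem resolvent_tendsto_projection
    {X : Type*} [NormedAddCommGroup X] [InnerProductSpace ℝ X] [CompleteSpace X]
    (m : ℕ) (hm : 2 ≤ m) (R : X →L[ℝ] X) (hR : ∀ x, ‖R x‖ = ‖x‖) (hRm : R ^ m = 1)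
    (J : ℝ → X →L[ℝ] X)
    (hJ : ∀ γ > (0 : ℝ), (1 + γ • (1 - R)) * J γ = 1 ∧ J γ * (1 + γ • (1 - R)) = 1)
    (x : X) :
    Filter.Tendsto (fun γ => J γ x) Filter.atTop
      (nhds (((m : ℝ)⁻¹ • ∑ k ∈ Finset.range m, R ^ k) x)) :=
  resolvent_tendsto_projection_general m hm R hRm J hJ x
end

section
/- With R a linear isometry of order m, M = Id − R, and D = Fix R, the range of M equals D^⊥; in particular ran M is closed. -/
/-!
An isometry preserves inner products, so `Fix R ⟂ ran (1 - R)`. Conversely, put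
`S = ∑_{k<m} R^k` and `T = ∑_{k<m} ∑_{j<k} R^j`; then `(1 - R) S = 0` and `(1 - R) T = m - S`.
For `y ∈ Dᗮ`, `S y` lies in `D` and, `Dᗮ` being `R`-invariant, also in `Dᗮ`; hence `S y = 0`
and `y = (1 - R) (T y / m)`. So `ran (1 - R) = Dᗮ`, which is closed.
-/

section Ring

open Finset

variable {A : Type*} [Ring A]

theorem one_sub_mul_geom_sum_eq_zero_of_pow_eq_one {r : A} {m : ℕ} (h : r ^ m = 1) :
    (1 - r) * ∑ k ∈ range m, r ^ k = 0 := by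
  rw [mul_neg_geom_sum, h, sub_self]

theorem one_sub_mul_sum_geom_sum (r : A) (m : ℕ) :
    (1 - r) * ∑ k ∈ range m, ∑ j ∈ range k, r ^ j = m - ∑ k ∈ range m, r ^ k := by
  rw [mul_sum]
  simp only [mul_neg_geom_sum, sum_sub_distrib, sum_const, card_range, nsmul_one]

end Ring

namespace LinearMap

variable {𝕜 E : Type*} [RCLike 𝕜] [NormedAddCommGroup E] [InnerProductSpace 𝕜 E]
  {T : E →ₗ[𝕜] E}

theorem mem_ker_one_sub_iff {x : E} : x ∈ ker (1 - T) ↔ T x = x := by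
  rw [mem_ker, sub_apply, Module.End.one_apply, sub_eq_zero, eq_comm]

variable (hT : ∀ x, ‖T x‖ = ‖x‖)
include hT

theorem range_one_sub_le_orthogonal_ker : range (1 - T) ≤ (ker (1 - T))ᗮ := by
  rintro _ ⟨x, rfl⟩
  refine (Submodule.mem_orthogonal _ _).2 fun d hd => ?_
  rw [sub_apply, Module.End.one_apply, inner_sub_right,
    ← (norm_map_iff_inner_map_map T).1 hT d x, mem_ker_one_sub_iff.1 hd, sub_self]

theorem apply_mem_orthogonal_ker_one_sub {y : E} (hy : y ∈ (ker (1 - T))ᗮ) :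
    T y ∈ (ker (1 - T))ᗮ := by
  refine (Submodule.mem_orthogonal _ _).2 fun d hd => ?_
  rw [← mem_ker_one_sub_iff.1 hd, (norm_map_iff_inner_map_map T).1 hT]
  exact Submodule.inner_right_of_mem_orthogonal hd hy

theorem sum_pow_apply_eq_zero_of_mem_orthogonal_ker {m : ℕ} (hTm : T ^ m = 1) {y : E}
    (hy : y ∈ (ker (1 - T))ᗮ) : (∑ k ∈ Finset.range m, T ^ k) y = 0 := by
  have h_ker : (∑ k ∈ Finset.range m, T ^ k) y ∈ ker (1 - T) := by
    rw [mem_ker, ← Module.End.mul_apply, one_sub_mul_geom_sum_eq_zero_of_pow_eq_one hTm,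
      zero_apply]
  have h_orth : (∑ k ∈ Finset.range m, T ^ k) y ∈ (ker (1 - T))ᗮ := by
    rw [sum_apply]
    exact Submodule.sum_mem _ fun k _ => Module.End.pow_apply_mem_of_forall_mem k
      (fun _ => apply_mem_orthogonal_ker_one_sub hT) y hy
  exact Submodule.disjoint_def.1 (Submodule.orthogonal_disjoint _) _ h_ker h_orth

theorem orthogonal_ker_le_range_one_sub {m : ℕ} (hm : m ≠ 0) (hTm : T ^ m = 1) :
    (ker (1 - T))ᗮ ≤ range (1 - T) := by
  intro y hy
  refine ⟨(m : 𝕜)⁻¹ • (∑ k ∈ Finset.range m, ∑ j ∈ Finset.range k, T ^ j) y, ?_⟩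
  rw [map_smul, ← Module.End.mul_apply, one_sub_mul_sum_geom_sum, sub_apply,
    sum_pow_apply_eq_zero_of_mem_orthogonal_ker hT hTm hy, sub_zero, Module.End.natCast_apply,
    ← Nat.cast_smul_eq_nsmul 𝕜, smul_smul, inv_mul_cancel₀ (Nat.cast_ne_zero.2 hm), one_smul]

theorem range_one_sub_eq_orthogonal_ker {m : ℕ} (hm : m ≠ 0) (hTm : T ^ m = 1) :
    range (1 - T) = (ker (1 - T))ᗮ :=
  le_antisymm (range_one_sub_le_orthogonal_ker hT) (orthogonal_ker_le_range_one_sub hT hm hTm)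

end LinearMap

theorem range_displacement_eq_orthogonal_general
    {X : Type*} [NormedAddCommGroup X] [InnerProductSpace ℝ X]
    (m : ℕ) (hm : 2 ≤ m) (R : X →L[ℝ] X) (hR : ∀ x, ‖R x‖ = ‖x‖) (hRm : R ^ m = 1)
    (D : Submodule ℝ X) (hD : ∀ x, x ∈ D ↔ R x = x) :
    LinearMap.range (((1 : X →L[ℝ] X) - R : X →L[ℝ] X) : X →ₗ[ℝ] X) = Dᗮ ∧
    IsClosed ((LinearMap.range (((1 : X →L[ℝ] X) - R : X →L[ℝ] X) : X →ₗ[ℝ] X) : Submodule ℝ X) : Set X) := by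
  set T : X →ₗ[ℝ] X := (R : X →ₗ[ℝ] X)
  have hTm : T ^ m = 1 := by rw [← ContinuousLinearMap.toLinearMap_pow, hRm]; rfl
  have hD_ker : D = LinearMap.ker (1 - T) :=
    Submodule.ext fun x => (hD x).trans LinearMap.mem_ker_one_sub_iff.symm
  have h_range : LinearMap.range (((1 : X →L[ℝ] X) - R : X →L[ℝ] X) : X →ₗ[ℝ] X) = Dᗮ := by
    rw [ContinuousLinearMap.toLinearMap_sub, ContinuousLinearMap.toLinearMap_one, hD_ker]
    exact LinearMap.range_one_sub_eq_orthogonal_ker hR (by omega) hTm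
  exact ⟨h_range, h_range ▸ D.isClosed_orthogonal⟩

/-- The range of the displacement mapping `M = Id − R` equals `Dᗮ` where `D = Fix R`;
in particular the range of `M` is closed. -/
theorem range_displacement_eq_orthogonal
    {X : Type*} [NormedAddCommGroup X] [InnerProductSpace ℝ X] [CompleteSpace X]
    (m : ℕ) (hm : 2 ≤ m) (R : X →L[ℝ] X) (hR : ∀ x, ‖R x‖ = ‖x‖) (hRm : R ^ m = 1)
    (D : Submodule ℝ X) (hD : ∀ x, x ∈ D ↔ R x = x) :
    LinearMap.range (((1 : X →L[ℝ] X) - R : X →L[ℝ] X) : X →ₗ[ℝ] X) = Dᗮ ∧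
    IsClosed ((LinearMap.range (((1 : X →L[ℝ] X) - R : X →L[ℝ] X) : X →ₗ[ℝ] X) : Submodule ℝ X) : Set X) :=
  range_displacement_eq_orthogonal_general m hm R hR hRm D hD
end

section
/- With R a linear isometry of order m, M = Id − R, and D = Fix R: for every y ∈ D^⊥, the vector x = (1/m) Σ_{k=0}^{m−2} (m−1−k) R^k y satisfies M x = y. -/
/-!
Telescoping gives `(1 - a) * ∑_{k<n} (n - k) • a^k = (n + 1) - ∑_{k≤n} a^k` in any ring. Applied to
`R` with `n = m - 1`, the theorem reduces to the vanishing of the orbit sum `s = ∑_{k<m} R^k y`. Since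
`R^m = 1`, `s` is fixed by `R`, so `s ∈ D`; since an isometry maps `(Fix R)ᗮ` into itself, `s ∈ Dᗮ`.
Hence `s = 0`.
-/

open Finset RealInnerProductSpace

theorem one_sub_mul_sum_range_sub_nsmul_pow {A : Type*} [Ring A] (a : A) (n : ℕ) :
    (1 - a) * ∑ k ∈ range n, (n - k) • a ^ k = ((n + 1 : ℕ) : A) - ∑ k ∈ range (n + 1), a ^ k := by
  induction n with
  | zero => simp
  | succ n ih =>
    have hsplit : ∑ k ∈ range (n + 1), (n + 1 - k) • a ^ k
        = ∑ k ∈ range n, (n - k) • a ^ k + ∑ k ∈ range (n + 1), a ^ k := by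
      have hlast : ∑ k ∈ range (n + 1), (n - k) • a ^ k = ∑ k ∈ range n, (n - k) • a ^ k := by
        simp [sum_range_succ]
      rw [← hlast, ← sum_add_distrib]
      refine sum_congr rfl fun k hk => ?_
      rw [← succ_nsmul, Nat.sub_add_comm (Nat.lt_succ_iff.mp (mem_range.mp hk))]
    rw [hsplit, mul_add, ih, mul_neg_geom_sum, sum_range_succ _ (n + 1)]
    push_cast
    abel

theorem ContinuousLinearMap.apply_mem_orthogonal_of_fixed {X : Type*} [NormedAddCommGroup X]
    [InnerProductSpace ℝ X] {R : X →L[ℝ] X} (hR : ∀ x, ‖R x‖ = ‖x‖) {D : Submodule ℝ X}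
    (hD : ∀ x ∈ D, R x = x) {y : X} (hy : y ∈ Dᗮ) : R y ∈ Dᗮ := by
  rw [Submodule.mem_orthogonal']
  intro v hv
  let L : X →ₗᵢ[ℝ] X := ⟨R.toLinearMap, hR⟩
  calc ⟪R y, v⟫ = ⟪L y, L v⟫ := by simp [L, hD v hv]
    _ = 0 := by rw [L.inner_map_map]; exact Submodule.inner_left_of_mem_orthogonal hv hy

theorem ContinuousLinearMap.sum_range_pow_apply_eq_zero_of_mem_orthogonal {X : Type*}
    [NormedAddCommGroup X] [InnerProductSpace ℝ X] {R : X →L[ℝ] X} (hR : ∀ x, ‖R x‖ = ‖x‖)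
    {m : ℕ} (hRm : R ^ m = 1) {D : Submodule ℝ X} (hD : ∀ x, x ∈ D ↔ R x = x) {y : X}
    (hy : y ∈ Dᗮ) : ∑ k ∈ range m, (R ^ k) y = 0 := by
  have hpow : ∀ k, (R ^ k) y ∈ Dᗮ := by
    intro k
    induction k with
    | zero => simpa
    | succ k ih =>
      rw [pow_succ', mul_apply_eq_comp]
      exact R.apply_mem_orthogonal_of_fixed hR (fun x hx => (hD x).1 hx) ih
  have hfixed : ∑ k ∈ range m, (R ^ k) y ∈ D := by
    have h := congrArg (fun T => T y) (mul_neg_geom_sum R m)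
    simp only [hRm, sub_self, mul_apply_eq_comp, sub_apply, one_apply_eq_self, _root_.sum_apply,
      zero_apply, sub_eq_zero] at h
    exact (hD _).2 h.symm
  exact Submodule.disjoint_def.mp D.orthogonal_disjoint _ hfixed
    (Submodule.sum_mem _ fun k _ => hpow k)

theorem explicit_preimage_displacement_general
    {X : Type*} [NormedAddCommGroup X] [InnerProductSpace ℝ X]
    (m : ℕ) (hm : 2 ≤ m) (R : X →L[ℝ] X) (hR : ∀ x, ‖R x‖ = ‖x‖) (hRm : R ^ m = 1)
    (D : Submodule ℝ X) (hD : ∀ x, x ∈ D ↔ R x = x) :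
    ∀ y ∈ Dᗮ,
      ((1 : X →L[ℝ] X) - R)
        ((m : ℝ)⁻¹ • ∑ k ∈ Finset.range (m - 1), ((m - 1 - k : ℕ) : ℝ) • (R ^ k) y) = y := by
  intro y hy
  obtain ⟨n, rfl⟩ : ∃ n, m = n + 1 := ⟨m - 1, by omega⟩
  have htele : (1 - R) (∑ k ∈ range n, (n - k) • (R ^ k) y) = (n + 1) • y := by
    have h := congrArg (· y) (one_sub_mul_sum_range_sub_nsmul_pow R n)
    simpa only [mul_apply_eq_comp, _root_.sum_apply, smul_apply,
      sub_apply ((n + 1 : ℕ) : X →L[ℝ] X), natCast_apply,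
      R.sum_range_pow_apply_eq_zero_of_mem_orthogonal hR hRm hD hy, sub_zero] using h
  simp only [Nat.add_sub_cancel, Nat.cast_smul_eq_nsmul, map_smul, htele]
  rw [← Nat.cast_smul_eq_nsmul ℝ, smul_smul, inv_mul_cancel₀ (by positivity), one_smul]

/-- For `y ∈ Dᗮ`, the vector `x = (1/m) Σ_{k=0}^{m−2} (m−1−k) R^k y` satisfies `Mx = y`. -/
theorem explicit_preimage_displacement
    {X : Type*} [NormedAddCommGroup X] [InnerProductSpace ℝ X] [CompleteSpace X]
    (m : ℕ) (hm : 2 ≤ m) (R : X →L[ℝ] X) (hR : ∀ x, ‖R x‖ = ‖x‖) (hRm : R ^ m = 1)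
    (D : Submodule ℝ X) (hD : ∀ x, x ∈ D ↔ R x = x) :
    ∀ y ∈ Dᗮ,
      ((1 : X →L[ℝ] X) - R)
        ((m : ℝ)⁻¹ • ∑ k ∈ Finset.range (m - 1), ((m - 1 - k : ℕ) : ℝ) • (R ^ k) y) = y :=
  explicit_preimage_displacement_general m hm R hR hRm D hD
end

section
/- With R a linear isometry of order m, M = Id − R, and T = (1/(2m)) Σ_{k=1}^{m−1} (m−2k) R^k: for every x ∈ X, M(2T(x − Rx)) = x − R^2 x. -/
/-!
Everything happens in the ring generated by `R`. Writing `P = Σ_{k<m} (m - 2k) Rᵏ`, a telescoping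
sum gives `(1 - R) P = 2m - 2 Σ_{k<m} Rᵏ` once `Rᵐ = 1`, and multiplying by `1 - R` kills the
geometric sum, so `(1 - R) P (1 - R) = 2m (1 - R)`. Removing the `k = 0` term `m` of `P` gives
`(1 - R) S (1 - R) = 2m (1 - R) - m (1 - R)² = m (1 - R²)` for `S = Σ_{k=1}^{m-1} (m - 2k) Rᵏ`,
and the factor `2 · (2m)⁻¹` cancels `m`.
-/

open Finset

section LinearCoefficients

variable {𝕜 A : Type*} [CommRing 𝕜] [Ring A] [Algebra 𝕜 A]

theorem one_sub_mul_sum_range_sub_two_mul_smul_pow (r : A) (a : 𝕜) (n : ℕ) :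
    (1 - r) * ∑ k ∈ range n, (a - 2 * k) • r ^ k
      = a • 1 - (a - 2 * n) • r ^ n - (2 : 𝕜) • ∑ k ∈ range n, r ^ (k + 1) := by
  induction n with
  | zero => simp
  | succ n ih =>
    simp only [sum_range_succ, mul_add, ih, mul_smul_comm, sub_mul, one_mul, ← pow_succ']
    push_cast
    module

theorem one_sub_mul_sum_range_smul_pow_mul_one_sub {r : A} {m : ℕ} (hr : r ^ m = 1) :
    (1 - r) * (∑ k ∈ range m, ((m : 𝕜) - 2 * k) • r ^ k) * (1 - r) = (2 * m : 𝕜) • (1 - r) := by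
  have hshift : ∑ k ∈ range m, r ^ (k + 1) = ∑ k ∈ range m, r ^ k := by
    have h := sum_range_succ' (r ^ ·) m
    rw [sum_range_succ, hr, pow_zero] at h
    exact add_right_cancel h.symm
  rw [one_sub_mul_sum_range_sub_two_mul_smul_pow, hshift, hr]
  simp only [sub_mul, smul_mul_assoc, one_mul, geom_sum_mul_neg, hr]
  module

theorem one_sub_mul_sum_Ico_smul_pow_mul_one_sub {r : A} {m : ℕ} (hm : 0 < m) (hr : r ^ m = 1) :
    (1 - r) * (∑ k ∈ Ico 1 m, ((m : 𝕜) - 2 * k) • r ^ k) * (1 - r) = (m : 𝕜) • (1 - r ^ 2) := by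
  have hP := one_sub_mul_sum_range_smul_pow_mul_one_sub (𝕜 := 𝕜) hr
  rw [sum_range_eq_add_Ico _ hm] at hP
  simp only [Nat.cast_zero, mul_zero, sub_zero, pow_zero, mul_add, add_mul, mul_smul_comm,
    smul_mul_assoc, mul_one] at hP
  have hsq : (1 - r) * (1 - r) = 1 - 2 • r + r ^ 2 := by noncomm_ring
  rw [hsq] at hP
  linear_combination (norm := module) hP

end LinearCoefficients

theorem M_two_T_identity_general
    {X : Type*} [NormedAddCommGroup X] [InnerProductSpace ℝ X]
    (m : ℕ) (hm : 2 ≤ m) (R : X →L[ℝ] X) (hRm : R ^ m = 1) :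
    ∀ x : X,
      ((1 : X →L[ℝ] X) - R)
        ((2 : ℝ) •
          ((2 * (m : ℝ))⁻¹ • ∑ k ∈ Finset.Ico 1 m, ((m : ℝ) - 2 * k) • R ^ k)
            (x - R x)) = x - (R ^ 2) x := by
  intro x
  have hm0 : (m : ℝ) ≠ 0 := by exact_mod_cast (by omega : m ≠ 0)
  have key := one_sub_mul_sum_Ico_smul_pow_mul_one_sub (𝕜 := ℝ) (by omega) hRm
  calc _ = ((2 : ℝ) * (2 * (m : ℝ))⁻¹) •
        (((1 - R) * (∑ k ∈ Finset.Ico 1 m, ((m : ℝ) - 2 * k) • R ^ k) * (1 - R)) x) := by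
        simp only [mul_apply_eq_comp, sub_apply, one_apply_eq_self, smul_apply, map_smul, smul_smul]
    _ = ((1 : X →L[ℝ] X) - R ^ 2) x := by
        rw [key, smul_apply, smul_smul,
          show (2 : ℝ) * (2 * (m : ℝ))⁻¹ * m = 1 by field_simp, one_smul]
    _ = x - (R ^ 2) x := rfl

/-- For every `x`, `M(2T(x − Rx)) = x − R²x`, where `M = Id − R` and
`T = (1/(2m)) Σ_{k=1}^{m−1} (m−2k) R^k`. -/
theorem M_two_T_identity
    {X : Type*} [NormedAddCommGroup X] [InnerProductSpace ℝ X] [CompleteSpace X]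
    (m : ℕ) (hm : 2 ≤ m) (R : X →L[ℝ] X) (hR : ∀ x, ‖R x‖ = ‖x‖) (hRm : R ^ m = 1) :
    ∀ x : X,
      ((1 : X →L[ℝ] X) - R)
        ((2 : ℝ) •
          ((2 * (m : ℝ))⁻¹ • ∑ k ∈ Finset.Ico 1 m, ((m : ℝ) - 2 * k) • R ^ k)
            (x - R x)) = x - (R ^ 2) x :=
  M_two_T_identity_general m hm R hRm
end

section
/- The Moore-Penrose inverse of M = Id − R equals Σ_{k=0}^{m−1} ((m−1−2k)/(2m)) R^k; equivalently M^† = (1/2) P_{D^⊥}(Id + 2T). -/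
/-!
With `S = ∑_{k<m} R^k`, the relation `R^m = 1` gives `(1 - R) S = S (1 - R) = 0`, and telescoping
`∑_{k<m} k R^k` against `1 - R` shows `(1 - R) G = G (1 - R) = 1 - S/m =: P`. The coefficients of
`G` sum to zero, so `S G = 0` and `P G = G`; also `P (1 - R) = 1 - R`. Finally `R* R = 1` makes the
idempotent `S/m` self-adjoint, hence so is `P`, and the four Penrose equations follow at once.
The formula with `T` is the identity `1 + 2T = 2G + S/m` multiplied by `P`.
-/

open Finset

section PowSums

variable {𝕜 A : Type*} [CommRing 𝕜] [Ring A] [Algebra 𝕜 A]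

theorem mul_pow_eq_self_of_mul_eq_self {M : Type*} [Monoid M] {y x : M} (h : y * x = y)
    (n : ℕ) : y * x ^ n = y := by
  induction n with
  | zero => rw [pow_zero, mul_one]
  | succ n ih => rw [pow_succ, ← mul_assoc, ih, h]

theorem mul_sum_smul_pow_of_mul_eq_self {y x : A} (h : y * x = y) (s : Finset ℕ) (f : ℕ → 𝕜) :
    y * ∑ k ∈ s, f k • x ^ k = (∑ k ∈ s, f k) • y := by
  simp only [mul_sum, mul_smul_comm, mul_pow_eq_self_of_mul_eq_self h, sum_smul]

theorem one_sub_mul_sum_range_natCast_smul_pow (x : A) (n : ℕ) :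
    (1 - x) * ∑ k ∈ range n, (k : 𝕜) • x ^ k = ∑ k ∈ range n, x ^ (k + 1) - (n : 𝕜) • x ^ n := by
  induction n with
  | zero => simp
  | succ n ih =>
    rw [sum_range_succ, mul_add, ih, sum_range_succ, mul_smul_comm, sub_mul, one_mul, ← pow_succ',
      smul_sub, Nat.cast_succ, add_smul, one_smul]
    abel

theorem sum_range_natCast_mul_two (n : ℕ) : (∑ k ∈ range n, (k : 𝕜)) * 2 = n * (n - 1) := by
  induction n with
  | zero => simp
  | succ n ih => rw [sum_range_succ, add_mul, ih]; push_cast; ring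

end PowSums

section DisplacementInverse

variable (𝕜 : Type*) {A : Type*} [Field 𝕜] [Ring A] [Algebra 𝕜 A]

def cyclicAverage (m : ℕ) (x : A) : A := (m : 𝕜)⁻¹ • ∑ k ∈ range m, x ^ k

def displacementInverse (m : ℕ) (x : A) : A :=
  ∑ k ∈ range m, (((m : 𝕜) - 1 - 2 * k) / (2 * m)) • x ^ k

variable {𝕜} {m : ℕ} {x : A}

theorem sum_range_displacementCoeff (m : ℕ) :
    ∑ k ∈ range m, (((m : 𝕜) - 1 - 2 * k) / (2 * m)) = 0 := by
  have h := sum_range_natCast_mul_two (𝕜 := 𝕜) m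
  rw [← sum_div, sum_sub_distrib, ← mul_sum, sum_const, card_range, nsmul_eq_mul]
  linear_combination (-1 / (2 * m) : 𝕜) * h

theorem sum_range_pow_succ_of_pow_eq_one (hx : x ^ m = 1) :
    ∑ k ∈ range m, x ^ (k + 1) = ∑ k ∈ range m, x ^ k := by
  have h := sum_range_succ' (fun k => x ^ k) m
  rw [sum_range_succ, hx, pow_zero] at h
  exact add_right_cancel h.symm

theorem cyclicAverage_mul_one_sub (hx : x ^ m = 1) : cyclicAverage 𝕜 m x * (1 - x) = 0 := by
  rw [cyclicAverage, smul_mul_assoc, geom_sum_mul_neg, hx, sub_self, smul_zero]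

theorem one_sub_mul_cyclicAverage (hx : x ^ m = 1) : (1 - x) * cyclicAverage 𝕜 m x = 0 := by
  rw [cyclicAverage, mul_smul_comm, mul_neg_geom_sum, hx, sub_self, smul_zero]

theorem cyclicAverage_mul_eq_cyclicAverage (hx : x ^ m = 1) :
    cyclicAverage 𝕜 m x * x = cyclicAverage 𝕜 m x := by
  simpa [mul_sub, sub_eq_zero, eq_comm] using cyclicAverage_mul_one_sub (𝕜 := 𝕜) hx

theorem mul_cyclicAverage_eq_cyclicAverage (hx : x ^ m = 1) :
    x * cyclicAverage 𝕜 m x = cyclicAverage 𝕜 m x := by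
  simpa [sub_mul, sub_eq_zero, eq_comm] using one_sub_mul_cyclicAverage (𝕜 := 𝕜) hx

theorem cyclicAverage_mul_displacementInverse (hx : x ^ m = 1) :
    cyclicAverage 𝕜 m x * displacementInverse 𝕜 m x = 0 := by
  rw [displacementInverse, mul_sum_smul_pow_of_mul_eq_self (cyclicAverage_mul_eq_cyclicAverage hx),
    sum_range_displacementCoeff, zero_smul]

theorem commute_displacementInverse (m : ℕ) (x : A) : Commute x (displacementInverse 𝕜 m x) :=
  Commute.sum_right _ _ _ fun k _ => ((Commute.refl x).pow_right k).smul_right _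

variable [CharZero 𝕜]

theorem mul_cyclicAverage_eq_self_of_mul_eq_self (hm : m ≠ 0) {y : A} (h : y * x = y) :
    y * cyclicAverage 𝕜 m x = y := by
  rw [cyclicAverage, mul_smul_comm, mul_sum,
    sum_congr rfl fun k _ => mul_pow_eq_self_of_mul_eq_self h k, sum_const, card_range,
    ← Nat.cast_smul_eq_nsmul 𝕜, smul_smul, inv_mul_cancel₀ (Nat.cast_ne_zero.mpr hm), one_smul]

theorem isIdempotentElem_cyclicAverage (hm : m ≠ 0) (hx : x ^ m = 1) :
    IsIdempotentElem (cyclicAverage 𝕜 m x) :=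
  mul_cyclicAverage_eq_self_of_mul_eq_self hm (cyclicAverage_mul_eq_cyclicAverage hx)

theorem displacementInverse_eq_sub (m : ℕ) (x : A) :
    displacementInverse 𝕜 m x = (((m : 𝕜) - 1) / (2 * m)) • ∑ k ∈ range m, x ^ k
      - (m : 𝕜)⁻¹ • ∑ k ∈ range m, (k : 𝕜) • x ^ k := by
  rw [displacementInverse, smul_sum, smul_sum, ← sum_sub_distrib]
  refine sum_congr rfl fun k _ => ?_
  rw [smul_smul, ← sub_smul]
  ring_nf

theorem one_sub_mul_displacementInverse (hm : m ≠ 0) (hx : x ^ m = 1) :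
    (1 - x) * displacementInverse 𝕜 m x = 1 - cyclicAverage 𝕜 m x := by
  have hS : (1 - x) * ∑ k ∈ range m, x ^ k = 0 := by rw [mul_neg_geom_sum, hx, sub_self]
  have hN : (1 - x) * ∑ k ∈ range m, (k : 𝕜) • x ^ k = ∑ k ∈ range m, x ^ k - (m : 𝕜) • 1 := by
    rw [one_sub_mul_sum_range_natCast_smul_pow, hx, sum_range_pow_succ_of_pow_eq_one hx]
  rw [displacementInverse_eq_sub, mul_sub, mul_smul_comm, mul_smul_comm, hS, hN, smul_zero,
    zero_sub, smul_sub, smul_smul, inv_mul_cancel₀ (Nat.cast_ne_zero.mpr hm), one_smul,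
    neg_sub, cyclicAverage]

theorem displacementInverse_mul_one_sub (hm : m ≠ 0) (hx : x ^ m = 1) :
    displacementInverse 𝕜 m x * (1 - x) = 1 - cyclicAverage 𝕜 m x := by
  rw [← ((Commute.one_left _).sub_left (commute_displacementInverse m x)).eq,
    one_sub_mul_displacementInverse hm hx]

theorem displacementInverse_eq_half_smul (hm : m ≠ 0) (hx : x ^ m = 1) :
    displacementInverse 𝕜 m x = (1 / 2 : 𝕜) • ((1 - cyclicAverage 𝕜 m x) *
      (1 + (2 : 𝕜) • ((2 * (m : 𝕜))⁻¹ • ∑ k ∈ Ico 1 m, ((m : 𝕜) - 2 * k) • x ^ k))) := by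
  have hT : 1 + (2 : 𝕜) • ((2 * (m : 𝕜))⁻¹ • ∑ k ∈ Ico 1 m, ((m : 𝕜) - 2 * k) • x ^ k)
      = (2 : 𝕜) • displacementInverse 𝕜 m x + cyclicAverage 𝕜 m x := by
    rw [displacementInverse, cyclicAverage, smul_sum, smul_sum, smul_sum, smul_sum,
      ← sum_add_distrib, sum_range_eq_add_Ico _ (Nat.pos_of_ne_zero hm)]
    congr 1
    · rw [pow_zero, smul_smul, ← add_smul, eq_comm]
      convert one_smul 𝕜 (1 : A) using 2
      field_simp
      ring
    · refine sum_congr rfl fun k _ => ?_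
      rw [smul_smul, smul_smul, smul_smul, ← add_smul]
      congr 1
      field_simp
      ring
  have hPP : (1 - cyclicAverage 𝕜 m x) * cyclicAverage 𝕜 m x = 0 := by
    rw [sub_mul, one_mul, (isIdempotentElem_cyclicAverage hm hx).eq, sub_self]
  rw [hT, mul_add, hPP, add_zero, mul_smul_comm, sub_mul, one_mul,
    cyclicAverage_mul_displacementInverse hx, sub_zero, smul_smul]
  norm_num

theorem star_cyclicAverage [StarRing A] (hm : m ≠ 0) (hx : x ^ m = 1) (hu : star x * x = 1) :
    star (cyclicAverage 𝕜 m x) = cyclicAverage 𝕜 m x := by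
  set a := cyclicAverage 𝕜 m x
  have hxa : star x * a = a :=
    calc star x * a = star x * (x * a) := by
          rw [show x * a = a from mul_cyclicAverage_eq_cyclicAverage hx]
      _ = a := by rw [← mul_assoc, hu, one_mul]
  have ha : star a * a = star a :=
    mul_cyclicAverage_eq_self_of_mul_eq_self hm (by simpa [star_mul] using congrArg star hxa)
  -- `star a * a` is self-adjoint and equals `star a`
  calc star a = star a * a := ha.symm
    _ = star (star a * a) := by rw [star_mul, star_star]
    _ = a := by rw [ha, star_star]

end DisplacementInverse

/-- The Moore-Penrose inverse of `M = Id − R` equals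
`G = Σ_{k=0}^{m−1} ((m−1−2k)/(2m)) R^k` (characterized by the four Penrose equations);
equivalently `M† = (1/2) P_{Dᗮ}(Id + 2T)`. -/
theorem moore_penrose_inverse_displacement
    {X : Type*} [NormedAddCommGroup X] [InnerProductSpace ℝ X] [CompleteSpace X]
    (m : ℕ) (hm : 2 ≤ m) (R : X →L[ℝ] X) (hR : ∀ x, ‖R x‖ = ‖x‖) (hRm : R ^ m = 1)
    (M G : X →L[ℝ] X) (hM : M = 1 - R)
    (hG : G = ∑ k ∈ Finset.range m, (((m : ℝ) - 1 - 2 * k) / (2 * m)) • R ^ k) :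
    M * G * M = M ∧ G * M * G = G ∧
    ContinuousLinearMap.adjoint (M * G) = M * G ∧
    ContinuousLinearMap.adjoint (G * M) = G * M ∧
    G = (1 / 2 : ℝ) •
        ((1 - (m : ℝ)⁻¹ • ∑ k ∈ Finset.range m, R ^ k) *
          (1 + (2 : ℝ) •
            ((2 * (m : ℝ))⁻¹ • ∑ k ∈ Finset.Ico 1 m, ((m : ℝ) - 2 * k) • R ^ k))) := by
  have hm0 : m ≠ 0 := by omega
  have hG' : G = displacementInverse ℝ m R := hG
  have hunitary : star R * R = 1 := (R.norm_map_iff_adjoint_comp_self).mp hR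
  have hMG : M * G = 1 - cyclicAverage ℝ m R := by
    rw [hM, hG', one_sub_mul_displacementInverse hm0 hRm]
  have hGM : G * M = 1 - cyclicAverage ℝ m R := by
    rw [hM, hG', displacementInverse_mul_one_sub hm0 hRm]
  have hPM : (1 - cyclicAverage ℝ m R) * M = M := by
    rw [hM, sub_mul, one_mul, cyclicAverage_mul_one_sub hRm, sub_zero]
  have hPG : (1 - cyclicAverage ℝ m R) * G = G := by
    rw [hG', sub_mul, one_mul, cyclicAverage_mul_displacementInverse hRm, sub_zero]
  have hP : star (1 - cyclicAverage ℝ m R) = 1 - cyclicAverage ℝ m R := by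
    rw [star_sub, star_one, star_cyclicAverage hm0 hRm hunitary]
  simp only [← ContinuousLinearMap.star_eq_adjoint]
  refine ⟨?_, ?_, ?_, ?_, hG'.trans (displacementInverse_eq_half_smul hm0 hRm)⟩
  · rw [hMG, hPM]
  · rw [hGM, hPG]
  · rw [hMG, hP]
  · rw [hGM, hP]
end

section
/- The operator G := Σ_{k=0}^{m−1} ((m−1−2k)/(2m)) R^k satisfies M G = P_{D^⊥}, where M = Id − R and P_{D^⊥} = Id − (1/m) Σ_{k=0}^{m−1} R^k. -/
open Finset

theorem mul_geom_sum_of_pow_eq_one {A : Type*} [Ring A] {a : A} {n : ℕ} (ha : a ^ n = 1) :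
    a * ∑ k ∈ range n, a ^ k = ∑ k ∈ range n, a ^ k := by
  have h := geom_sum_succ (x := a) (n := n)
  rw [sum_range_succ, ha] at h
  exact add_right_cancel h.symm

theorem one_sub_mul_sum_range_nsmul_pow {A : Type*} [Ring A] (a : A) (n : ℕ) :
    (1 - a) * ∑ k ∈ range n, k • a ^ k = a * ∑ k ∈ range n, a ^ k - n • a ^ n := by
  induction n with
  | zero => simp
  | succ n ih =>
    rw [sum_range_succ, mul_add, ih, sum_range_succ, mul_add, pow_succ']
    simp only [mul_smul_comm, sub_mul, one_mul, smul_sub, succ_nsmul]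
    abel

/-- The affine coefficients `(m - 1 - 2k) / (2m) = (m - 1) / (2m) - k / m` split the sum into a
geometric part, killed by `1 - a`, and a weighted part, which `1 - a` telescopes. -/
theorem one_sub_mul_sum_range_smul_pow_of_pow_eq_one {𝕜 A : Type*} [Field 𝕜] [CharZero 𝕜]
    [Ring A] [Algebra 𝕜 A] {a : A} {m : ℕ} (hm : m ≠ 0) (ha : a ^ m = 1) :
    (1 - a) * ∑ k ∈ range m, (((m : 𝕜) - 1 - 2 * k) / (2 * m)) • a ^ k =
      1 - (m : 𝕜)⁻¹ • ∑ k ∈ range m, a ^ k := by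
  have hm' : (m : 𝕜) ≠ 0 := Nat.cast_ne_zero.2 hm
  have hcoeff : ∀ k : ℕ,
      ((m : 𝕜) - 1 - 2 * k) / (2 * m) = ((m : 𝕜) - 1) / (2 * m) - (m : 𝕜)⁻¹ * k := by
    intro k; field_simp
  have hsplit : ∑ k ∈ range m, (((m : 𝕜) - 1 - 2 * k) / (2 * m)) • a ^ k =
      (((m : 𝕜) - 1) / (2 * m)) • ∑ k ∈ range m, a ^ k -
        (m : 𝕜)⁻¹ • ∑ k ∈ range m, k • a ^ k := by
    simp only [hcoeff, sub_smul, mul_smul, sum_sub_distrib, ← smul_sum, Nat.cast_smul_eq_nsmul]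
  have hgeom : (1 - a) * ∑ k ∈ range m, a ^ k = 0 := by rw [mul_neg_geom_sum, ha, sub_self]
  have hweighted :
      (1 - a) * ∑ k ∈ range m, k • a ^ k = ∑ k ∈ range m, a ^ k - (m : 𝕜) • 1 := by
    rw [one_sub_mul_sum_range_nsmul_pow, mul_geom_sum_of_pow_eq_one ha, ha, Nat.cast_smul_eq_nsmul]
  rw [hsplit, mul_sub, mul_smul_comm, mul_smul_comm, hgeom, hweighted, smul_zero, zero_sub,
    smul_sub, smul_smul, inv_mul_cancel₀ hm', one_smul]
  abel

theorem M_comp_G_eq_projection_general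
    {X : Type*} [NormedAddCommGroup X] [InnerProductSpace ℝ X]
    (m : ℕ) (hm : 2 ≤ m) (R : X →L[ℝ] X) (hRm : R ^ m = 1) :
    (1 - R) * (∑ k ∈ Finset.range m, (((m : ℝ) - 1 - 2 * k) / (2 * m)) • R ^ k) =
      1 - (m : ℝ)⁻¹ • ∑ k ∈ Finset.range m, R ^ k :=
  one_sub_mul_sum_range_smul_pow_of_pow_eq_one (by omega) hRm

/-- `M G = P_{Dᗮ}` where `G = Σ_{k=0}^{m−1} ((m−1−2k)/(2m)) R^k`, `M = Id − R`,
and `P_{Dᗮ} = Id − (1/m) Σ_{k=0}^{m−1} R^k`. -/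
theorem M_comp_G_eq_projection
    {X : Type*} [NormedAddCommGroup X] [InnerProductSpace ℝ X] [CompleteSpace X]
    (m : ℕ) (hm : 2 ≤ m) (R : X →L[ℝ] X) (hR : ∀ x, ‖R x‖ = ‖x‖) (hRm : R ^ m = 1) :
    (1 - R) * (∑ k ∈ Finset.range m, (((m : ℝ) - 1 - 2 * k) / (2 * m)) • R ^ k) =
      1 - (m : ℝ)⁻¹ • ∑ k ∈ Finset.range m, R ^ k :=
  M_comp_G_eq_projection_general m hm R hRm
end

section
/- With R a linear isometry of order m, M = Id − R, and γ > 0: the resolvent of γM^{-1} equals Id − J_{(1/γ)M}, i.e., J_{γM^{-1}} = Id − (1/(( 1+1/γ)^m − (1/γ)^m)) Σ_{k=0}^{m−1} (1+1/γ)^{m−1−k} (1/γ)^k R^k, and this operator is a Banach contraction with Lipschitz constant 2/(2+γ). -/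
/-!
Write `δ = γ⁻¹` and `M = 1 - R`. Because `R ^ m = 1`, the geometric-sum identity
`((1 + δ) - δ R) * ∑ (1 + δ) ^ (m - 1 - k) (δ R) ^ k = (1 + δ) ^ m - δ ^ m` shows that the
normalised sum `J` is the two-sided inverse of `1 + δ M`, i.e. `J = J_{δM}`, so `Q = 1 - J`.
Then `x ∈ z + γ M⁻¹ z` says `x - z = J x`, which is `z = Q x`.

For the contraction bound write `v = u + δ y` with `u = J v` and `y = u - R u`, so `Q v = δ y`.
As `R` is an isometry, `‖y‖² = 2⟪u, y⟫`; hence `‖y‖ ≤ 2‖u‖` and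
`‖γ u + y‖² = γ² ‖u‖² + (1 + γ) ‖y‖² ≥ ((2 + γ) / 2)² ‖y‖²`.
-/

open Finset

section GeomSum

variable {𝕜 A : Type*} [CommRing 𝕜] [Ring A] [Algebra 𝕜 A]

theorem sum_smul_pow_eq_geom_sum₂ (a δ : 𝕜) (r : A) (n : ℕ) :
    ∑ k ∈ range n, (a ^ (n - 1 - k) * δ ^ k) • r ^ k =
      ∑ k ∈ range n, (δ • r) ^ k * algebraMap 𝕜 A a ^ (n - 1 - k) := by
  refine sum_congr rfl fun k _ => ?_
  rw [smul_pow, ← map_pow, ← Algebra.commutes, ← Algebra.smul_def, smul_smul]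

theorem algebraMap_sub_smul_mul_sum_smul_pow (a δ : 𝕜) (r : A) (n : ℕ) :
    (algebraMap 𝕜 A a - δ • r) * ∑ k ∈ range n, (a ^ (n - 1 - k) * δ ^ k) • r ^ k =
      algebraMap 𝕜 A (a ^ n) - δ ^ n • r ^ n := by
  rw [sum_smul_pow_eq_geom_sum₂, (Algebra.commute_algebraMap_right a (δ • r)).mul_neg_geom_sum₂,
    map_pow, smul_pow]

theorem sum_smul_pow_mul_algebraMap_sub_smul (a δ : 𝕜) (r : A) (n : ℕ) :
    (∑ k ∈ range n, (a ^ (n - 1 - k) * δ ^ k) • r ^ k) * (algebraMap 𝕜 A a - δ • r) =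
      algebraMap 𝕜 A (a ^ n) - δ ^ n • r ^ n := by
  rw [sum_smul_pow_eq_geom_sum₂, ← neg_sub, mul_neg,
    (Algebra.commute_algebraMap_right a (δ • r)).geom_sum₂_mul, neg_sub, map_pow, smul_pow]

theorem one_add_smul_one_sub_eq (δ : 𝕜) (r : A) :
    1 + δ • (1 - r) = algebraMap 𝕜 A (1 + δ) - δ • r := by
  rw [Algebra.algebraMap_eq_smul_one, add_smul, one_smul, smul_sub, add_sub_assoc]

end GeomSum

section CyclicResolvent

variable {𝕜 A : Type*} [Field 𝕜] [Ring A] [Algebra 𝕜 A]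

/-- For `r ^ n = 1` this is the resolvent `J_{δM} = (1 + δ M)⁻¹` of `M = 1 - r`. -/
def cyclicResolvent (δ : 𝕜) (r : A) (n : ℕ) : A :=
  ((1 + δ) ^ n - δ ^ n)⁻¹ • ∑ k ∈ range n, ((1 + δ) ^ (n - 1 - k) * δ ^ k) • r ^ k

variable {δ : 𝕜} {r : A} {n : ℕ}

theorem cyclicResolvent_mul (hr : r ^ n = 1) (hδ : (1 + δ) ^ n - δ ^ n ≠ 0) :
    cyclicResolvent δ r n * (1 + δ • (1 - r)) = 1 := by
  rw [cyclicResolvent, smul_mul_assoc, one_add_smul_one_sub_eq,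
    sum_smul_pow_mul_algebraMap_sub_smul, hr, Algebra.algebraMap_eq_smul_one, ← sub_smul,
    smul_smul, inv_mul_cancel₀ hδ, one_smul]

theorem mul_cyclicResolvent (hr : r ^ n = 1) (hδ : (1 + δ) ^ n - δ ^ n ≠ 0) :
    (1 + δ • (1 - r)) * cyclicResolvent δ r n = 1 := by
  rw [cyclicResolvent, mul_smul_comm, one_add_smul_one_sub_eq,
    algebraMap_sub_smul_mul_sum_smul_pow, hr, Algebra.algebraMap_eq_smul_one, ← sub_smul,
    smul_smul, inv_mul_cancel₀ hδ, one_smul]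

end CyclicResolvent

theorem exists_apply_eq_and_eq_add_smul_iff {𝕜 E : Type*} [NormedField 𝕜] [NormedAddCommGroup E]
    [NormedSpace 𝕜 E] {M J : E →L[𝕜] E} {γ : 𝕜} (hγ : γ ≠ 0)
    (hJM : J * (1 + γ⁻¹ • M) = 1) (hMJ : (1 + γ⁻¹ • M) * J = 1) (x z : E) :
    (∃ w, M w = z ∧ x = z + γ • w) ↔ z = (1 - J) x := by
  simp only [ContinuousLinearMap.ext_iff, mul_apply_eq_comp, add_apply, smul_apply,
    one_apply_eq_self] at hJM hMJ
  rw [sub_apply, one_apply_eq_self]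
  constructor
  · rintro ⟨w, rfl, rfl⟩
    have hJx : J (M w + γ • w) = γ • w := by
      simpa [smul_smul, inv_mul_cancel₀ hγ, add_comm] using hJM (γ • w)
    rw [hJx, add_sub_cancel_right]
  · rintro rfl
    refine ⟨γ⁻¹ • J x, ?_, ?_⟩
    · rw [map_smul]
      linear_combination (norm := module) hMJ x
    · rw [smul_smul, mul_inv_cancel₀ hγ, one_smul, sub_add_cancel]

section InnerProduct

variable {E : Type*} [NormedAddCommGroup E] [InnerProductSpace ℝ E]

theorem norm_sub_apply_sq_eq_two_mul_inner {R : E →L[ℝ] E} (hR : ∀ x, ‖R x‖ = ‖x‖) (u : E) :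
    ‖u - R u‖ ^ 2 = 2 * inner ℝ u (u - R u) := by
  rw [norm_sub_sq_real, hR, inner_sub_right, real_inner_self_eq_norm_sq]
  ring

theorem add_mul_norm_le_two_mul_norm_smul_add {u y : E} (huy : ‖y‖ ^ 2 = 2 * inner ℝ u y)
    {γ : ℝ} (hγ : 0 ≤ γ) : (2 + γ) * ‖y‖ ≤ 2 * ‖γ • u + y‖ := by
  have hy : ‖y‖ ≤ 2 * ‖u‖ := by
    nlinarith [real_inner_le_norm u y, norm_nonneg u, norm_nonneg y]
  have hsq : ‖γ • u + y‖ ^ 2 = γ ^ 2 * ‖u‖ ^ 2 + (1 + γ) * ‖y‖ ^ 2 := by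
    rw [norm_add_sq_real, norm_smul, real_inner_smul_left, Real.norm_of_nonneg hγ]
    linear_combination (-γ) * huy
  refine (pow_le_pow_iff_left₀ (by positivity) (by positivity) two_ne_zero).1 ?_
  nlinarith [mul_le_mul_of_nonneg_left (pow_le_pow_left₀ (norm_nonneg y) hy 2) (sq_nonneg γ)]

theorem norm_one_sub_apply_le_of_mul_eq_one {R J : E →L[ℝ] E} (hR : ∀ x, ‖R x‖ = ‖x‖) {γ : ℝ}
    (hγ : 0 < γ) (hJ : (1 + γ⁻¹ • (1 - R)) * J = 1) (v : E) :
    ‖(1 - J) v‖ ≤ 2 / (2 + γ) * ‖v‖ := by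
  obtain ⟨u, hu⟩ : ∃ u, J v = u := ⟨_, rfl⟩
  have hv : v = u + γ⁻¹ • (u - R u) := by
    simpa [hu] using congr($hJ v).symm
  have hv' : v = γ⁻¹ • (γ • u + (u - R u)) := by
    rw [hv, smul_add, smul_smul, inv_mul_cancel₀ hγ.ne', one_smul]
  have hRu := add_mul_norm_le_two_mul_norm_smul_add (norm_sub_apply_sq_eq_two_mul_inner hR u)
    hγ.le
  calc ‖(1 - J) v‖ = γ⁻¹ * ‖u - R u‖ := by
        rw [sub_apply, one_apply_eq_self, hu, ← norm_smul_of_nonneg (inv_nonneg.2 hγ.le),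
          hv, add_sub_cancel_left]
    _ ≤ γ⁻¹ * (2 / (2 + γ) * ‖γ • u + (u - R u)‖) := by
        gcongr
        rwa [div_mul_eq_mul_div, le_div_iff₀' (by positivity)]
    _ = 2 / (2 + γ) * ‖v‖ := by
        rw [hv', norm_smul_of_nonneg (inv_nonneg.2 hγ.le)]
        ring

end InnerProduct

theorem resolvent_of_inverse_general
    {X : Type*} [NormedAddCommGroup X] [InnerProductSpace ℝ X]
    (m : ℕ) (hm : 2 ≤ m) (R : X →L[ℝ] X) (hR : ∀ x, ‖R x‖ = ‖x‖) (hRm : R ^ m = 1)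
    (γ : ℝ) (hγ : 0 < γ) (Q : X →L[ℝ] X)
    (hQ : Q = 1 - ((1 + γ⁻¹) ^ m - (γ⁻¹) ^ m)⁻¹ •
        ∑ k ∈ Finset.range m, ((1 + γ⁻¹) ^ (m - 1 - k) * γ⁻¹ ^ k) • R ^ k) :
    (∀ x z : X, (∃ w : X, ((1 : X →L[ℝ] X) - R) w = z ∧ x = z + γ • w) ↔ z = Q x) ∧
    ∀ x y : X, ‖Q x - Q y‖ ≤ (2 / (2 + γ)) * ‖x - y‖ := by
  have hc : (1 + γ⁻¹) ^ m - γ⁻¹ ^ m ≠ 0 :=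
    (sub_pos.2 (pow_lt_pow_left₀ (lt_one_add _) (inv_nonneg.2 hγ.le) (by omega))).ne'
  have hQ : Q = 1 - cyclicResolvent γ⁻¹ R m := hQ
  subst hQ
  refine ⟨exists_apply_eq_and_eq_add_smul_iff hγ.ne' (cyclicResolvent_mul hRm hc)
    (mul_cyclicResolvent hRm hc), fun x y => ?_⟩
  rw [← map_sub]
  exact norm_one_sub_apply_le_of_mul_eq_one hR hγ (mul_cyclicResolvent hRm hc) (x - y)

/-- The resolvent of `γM⁻¹` equals `Id − J_{(1/γ)M}` (given by the explicit formula),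
and it is a Banach contraction with Lipschitz constant `2/(2+γ)`. -/
theorem resolvent_of_inverse
    {X : Type*} [NormedAddCommGroup X] [InnerProductSpace ℝ X] [CompleteSpace X]
    (m : ℕ) (hm : 2 ≤ m) (R : X →L[ℝ] X) (hR : ∀ x, ‖R x‖ = ‖x‖) (hRm : R ^ m = 1)
    (γ : ℝ) (hγ : 0 < γ) (Q : X →L[ℝ] X)
    (hQ : Q = 1 - ((1 + γ⁻¹) ^ m - (γ⁻¹) ^ m)⁻¹ •
        ∑ k ∈ Finset.range m, ((1 + γ⁻¹) ^ (m - 1 - k) * γ⁻¹ ^ k) • R ^ k) :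
    (∀ x z : X, (∃ w : X, ((1 : X →L[ℝ] X) - R) w = z ∧ x = z + γ • w) ↔ z = Q x) ∧
    ∀ x y : X, ‖Q x - Q y‖ ≤ (2 / (2 + γ)) * ‖x - y‖ :=
  resolvent_of_inverse_general m hm R hR hRm γ hγ Q hQ
end
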